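/- In the monoid M₅ = ⟨a,b | aba = ba⟩, every element is equal to a unique word of the form (ba)^α a^β b^γ with α, β, γ ≥ 0, and the product of (ba)^{α₁}a^{β₁}b^{γ₁} and (ba)^{α₂}a^{β₂}b^{γ₂} equals: (ba)^{α₁+γ₁+α₂}a^{β₂}b^{γ₂} if α₂ ≠ 0; (ba)^{α₁+γ₁}a^{β₂-1}b^{γ₂} if α₂ = 0, β₂ ≠ 0, γ₁ ≠ 0; (ba)^{α₁}a^{β₁+β₂}b^{γ₂} if α₂ = 0, β₂ ≠ 0, γ₁ = 0; and (ba)^{α₁}a^{β₁}b^{γ₁+γ₂} if α₂ = β₂ = 0. -/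
import Mathlib


/-- The defining relation of `M₅ = ⟨a, b | aba = ba⟩`, with `a` encoded as `true`
and `b` as `false`. -/
def rel5 : FreeMonoid Bool → FreeMonoid Bool → Prop :=
  fun u v => u = FreeMonoid.of true * FreeMonoid.of false * FreeMonoid.of true ∧
    v = FreeMonoid.of false * FreeMonoid.of true

abbrev M5 : Type := PresentedMonoid rel5

noncomputable def a : M5 := PresentedMonoid.of rel5 true

noncomputable def b : M5 := PresentedMonoid.of rel5 false

/-! ### Auxiliary model monoid -/

structure N5 where
  fst : ℕ
  snd : ℕ
  trd : ℕ
deriving DecidableEq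

def nmul (p q : N5) : N5 :=
  if q.fst ≠ 0 then ⟨p.fst + p.trd + q.fst, q.snd, q.trd⟩
  else if q.snd ≠ 0 then
    if p.trd ≠ 0 then ⟨p.fst + p.trd, q.snd - 1, q.trd⟩
    else ⟨p.fst, p.snd + q.snd, q.trd⟩
  else ⟨p.fst, p.snd, p.trd + q.trd⟩

instance : Monoid N5 where
  mul := nmul
  one := ⟨0, 0, 0⟩
  mul_assoc x y z := by
    obtain ⟨x1, x2, x3⟩ := x; obtain ⟨y1, y2, y3⟩ := y; obtain ⟨z1, z2, z3⟩ := z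
    show nmul (nmul _ _) _ = nmul _ (nmul _ _)
    simp only [nmul]
    split_ifs <;> simp_all <;> omega
  one_mul y := by
    obtain ⟨y1, y2, y3⟩ := y
    show nmul ⟨0,0,0⟩ _ = _
    simp only [nmul]
    split_ifs <;> simp_all <;> omega
  mul_one x := by
    obtain ⟨x1, x2, x3⟩ := x
    show nmul _ ⟨0,0,0⟩ = _
    simp [nmul]

lemma N5.mul_def (x y : N5) : x * y = nmul x y := rfl

def A : N5 := ⟨0, 1, 0⟩
def B : N5 := ⟨0, 0, 1⟩

lemma N5.pow_BA (α : ℕ) : (B * A) ^ α = ⟨α, 0, 0⟩ := by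
  induction α with
  | zero => rfl
  | succ k ih =>
    rw [pow_succ, ih, N5.mul_def, N5.mul_def]
    simp [nmul, A, B]

lemma N5.pow_A (β : ℕ) : A ^ β = ⟨0, β, 0⟩ := by
  induction β with
  | zero => rfl
  | succ k ih =>
    rw [pow_succ, ih, N5.mul_def]
    simp [nmul, A]

lemma N5.pow_B (γ : ℕ) : B ^ γ = ⟨0, 0, γ⟩ := by
  induction γ with
  | zero => rfl
  | succ k ih =>
    rw [pow_succ, ih, N5.mul_def]
    simp [nmul, B]

lemma N5.nf_val (α β γ : ℕ) :
    (B * A) ^ α * A ^ β * B ^ γ = ⟨α, β, γ⟩ := by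
  rw [N5.pow_BA, N5.pow_A, N5.pow_B, N5.mul_def, N5.mul_def]
  simp only [nmul]
  split_ifs <;> simp_all <;> omega

/-! ### The homomorphism `M5 →* N5` -/

noncomputable def φ : M5 →* N5 :=
  PresentedMonoid.lift (fun x : Bool => cond x A B) (by
    rintro u v ⟨hu, hv⟩
    subst hu hv
    simp only [map_mul, FreeMonoid.lift_eval_of, Bool.cond_true, Bool.cond_false]
    decide)

lemma φ_a : φ a = A := rfl
lemma φ_b : φ b = B := rfl

lemma φ_nf (p : ℕ × ℕ × ℕ) :
    φ ((b * a) ^ p.1 * a ^ p.2.1 * b ^ p.2.2) = ⟨p.1, p.2.1, p.2.2⟩ := by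
  simp only [map_mul, map_pow, φ_a, φ_b]
  exact N5.nf_val _ _ _

/-! ### Relations in `M5` -/

lemma rel_aba : a * b * a = b * a :=
  Quotient.sound (ConGen.Rel.of _ _ ⟨rfl, rfl⟩)

lemma a_mul_ba (x : M5) : a * ((b * a) * x) = (b * a) * x := by
  rw [← mul_assoc, ← mul_assoc, rel_aba]

lemma apow_mul_ba (β : ℕ) (x : M5) : a ^ β * ((b * a) * x) = (b * a) * x := by
  induction β with
  | zero => rw [pow_zero, one_mul]
  | succ k ih => rw [pow_succ, mul_assoc, a_mul_ba, ih]

lemma apow_mul_bapow (β k : ℕ) (x : M5) :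
    a ^ β * ((b * a) ^ (k + 1) * x) = (b * a) ^ (k + 1) * x := by
  rw [pow_succ', mul_assoc, apow_mul_ba]

lemma ba_ba : (b * a) * (b * a) = b * (b * a) := by
  have h : a * (b * a) = b * a := by rw [← mul_assoc]; exact rel_aba
  rw [mul_assoc b a (b * a), h]

lemma b_mul_ba (x : M5) : b * ((b * a) * x) = (b * a) * ((b * a) * x) := by
  rw [← mul_assoc, ← ba_ba, mul_assoc]

lemma b_mul_bapow (k : ℕ) (x : M5) :
    b * ((b * a) ^ (k + 1) * x) = (b * a) ^ (k + 2) * x := by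
  rw [pow_succ' (b * a) k, mul_assoc, b_mul_ba, pow_succ' (b * a) (k + 1),
    pow_succ' (b * a) k]
  simp only [mul_assoc]

lemma bpow_mul_a (k : ℕ) (x : M5) :
    b ^ (k + 1) * (a * x) = (b * a) ^ (k + 1) * x := by
  induction k with
  | zero => rw [pow_one, pow_one, mul_assoc]
  | succ n ih =>
    rw [pow_succ', mul_assoc, ih, b_mul_bapow]

lemma bpow_mul_bapow (γ k : ℕ) (x : M5) :
    b ^ γ * ((b * a) ^ (k + 1) * x) = (b * a) ^ (γ + k + 1) * x := by
  induction γ with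
  | zero => rw [pow_zero, one_mul, Nat.zero_add]
  | succ n ih =>
    rw [pow_succ', mul_assoc, ih, b_mul_bapow,
      show n + 1 + k + 1 = n + k + 1 + 1 from by omega]

/-! ### The four multiplication cases -/

lemma case1 (α₁ β₁ γ₁ α₂ β₂ γ₂ : ℕ) (h : α₂ ≠ 0) :
    ((b * a) ^ α₁ * a ^ β₁ * b ^ γ₁) * ((b * a) ^ α₂ * a ^ β₂ * b ^ γ₂) =
      (b * a) ^ (α₁ + γ₁ + α₂) * a ^ β₂ * b ^ γ₂ := by
  obtain ⟨m, rfl⟩ := Nat.exists_eq_succ_of_ne_zero h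
  simp only [mul_assoc]
  rw [bpow_mul_bapow, apow_mul_bapow, ← mul_assoc, ← pow_add,
    show α₁ + γ₁ + (m + 1) = α₁ + (γ₁ + m + 1) from by omega]

lemma case3 (α₁ β₁ β₂ γ₂ : ℕ) :
    ((b * a) ^ α₁ * a ^ β₁ * b ^ 0) * ((b * a) ^ 0 * a ^ β₂ * b ^ γ₂) =
      (b * a) ^ α₁ * a ^ (β₁ + β₂) * b ^ γ₂ := by
  rw [pow_add]
  simp only [pow_zero, mul_one, one_mul, mul_assoc]

lemma case4 (α₁ β₁ γ₁ γ₂ : ℕ) :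
    ((b * a) ^ α₁ * a ^ β₁ * b ^ γ₁) * ((b * a) ^ 0 * a ^ 0 * b ^ γ₂) =
      (b * a) ^ α₁ * a ^ β₁ * b ^ (γ₁ + γ₂) := by
  rw [pow_add]
  simp only [pow_zero, mul_one, one_mul, mul_assoc]

lemma case2 (α₁ β₁ γ₁ β₂ γ₂ : ℕ) (hβ : β₂ ≠ 0) (hγ : γ₁ ≠ 0) :
    ((b * a) ^ α₁ * a ^ β₁ * b ^ γ₁) * ((b * a) ^ 0 * a ^ β₂ * b ^ γ₂) =
      (b * a) ^ (α₁ + γ₁) * a ^ (β₂ - 1) * b ^ γ₂ := by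
  obtain ⟨m, rfl⟩ := Nat.exists_eq_succ_of_ne_zero hβ
  obtain ⟨n, rfl⟩ := Nat.exists_eq_succ_of_ne_zero hγ
  simp only [pow_zero, one_mul, mul_assoc]
  rw [pow_succ' a m, mul_assoc, bpow_mul_a, apow_mul_bapow, ← mul_assoc, ← pow_add,
    Nat.succ_sub_one, show α₁ + (n + 1) = α₁ + (n + 1) from rfl]

/-- The product of two normal forms is the normal form of `nmul`. -/
lemma nf_mul_nf (p q : ℕ × ℕ × ℕ) :
    ((b * a) ^ p.1 * a ^ p.2.1 * b ^ p.2.2) * ((b * a) ^ q.1 * a ^ q.2.1 * b ^ q.2.2) =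
      (b * a) ^ (nmul ⟨p.1, p.2.1, p.2.2⟩ ⟨q.1, q.2.1, q.2.2⟩).fst *
        a ^ (nmul ⟨p.1, p.2.1, p.2.2⟩ ⟨q.1, q.2.1, q.2.2⟩).snd *
        b ^ (nmul ⟨p.1, p.2.1, p.2.2⟩ ⟨q.1, q.2.1, q.2.2⟩).trd := by
  obtain ⟨α₁, β₁, γ₁⟩ := p
  obtain ⟨α₂, β₂, γ₂⟩ := q
  by_cases h1 : α₂ ≠ 0
  · rw [case1 _ _ _ _ _ _ h1]
    simp [nmul, h1]
  · push_neg at h1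
    subst h1
    by_cases h2 : β₂ ≠ 0
    · by_cases h3 : γ₁ ≠ 0
      · rw [case2 _ _ _ _ _ h2 h3]
        simp [nmul, h2, h3]
      · push_neg at h3
        subst h3
        rw [case3]
        simp [nmul, h2]
    · push_neg at h2
      subst h2
      rw [case4]
      simp [nmul]

lemma exists_nf (x : M5) :
    ∃ p : ℕ × ℕ × ℕ, x = (b * a) ^ p.1 * a ^ p.2.1 * b ^ p.2.2 := by
  have hx : x ∈ (⊤ : Submonoid M5) := trivial
  rw [← PresentedMonoid.closure_range_of rel5] at hx
  induction hx using Submonoid.closure_induction with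
  | mem y hy =>
    obtain ⟨c, rfl⟩ := hy
    cases c
    · exact ⟨(0, 0, 1), by simp [b]⟩
    · exact ⟨(0, 1, 0), by simp [a]⟩
  | one => exact ⟨(0, 0, 0), by simp⟩
  | mul y z _ _ hy hz =>
    obtain ⟨p, rfl⟩ := hy
    obtain ⟨q, rfl⟩ := hz
    refine ⟨((nmul ⟨p.1, p.2.1, p.2.2⟩ ⟨q.1, q.2.1, q.2.2⟩).fst,
      (nmul ⟨p.1, p.2.1, p.2.2⟩ ⟨q.1, q.2.1, q.2.2⟩).snd,
      (nmul ⟨p.1, p.2.1, p.2.2⟩ ⟨q.1, q.2.1, q.2.2⟩).trd), ?_⟩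
    exact nf_mul_nf p q

/-- In `M₅ = ⟨a, b | aba = ba⟩`, every element is equal to a unique word
`(ba)^α a^β b^γ`, and multiplication is given by the four-case rule of
Shneerson's normal form lemma. -/
theorem M5_normal_form :
    (∀ x : M5, ∃! p : ℕ × ℕ × ℕ, x = (b * a) ^ p.1 * a ^ p.2.1 * b ^ p.2.2) ∧
      ∀ α₁ β₁ γ₁ α₂ β₂ γ₂ : ℕ,
        (α₂ ≠ 0 →
          ((b * a) ^ α₁ * a ^ β₁ * b ^ γ₁) * ((b * a) ^ α₂ * a ^ β₂ * b ^ γ₂) =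
            (b * a) ^ (α₁ + γ₁ + α₂) * a ^ β₂ * b ^ γ₂) ∧
        (α₂ = 0 → β₂ ≠ 0 → γ₁ ≠ 0 →
          ((b * a) ^ α₁ * a ^ β₁ * b ^ γ₁) * ((b * a) ^ α₂ * a ^ β₂ * b ^ γ₂) =
            (b * a) ^ (α₁ + γ₁) * a ^ (β₂ - 1) * b ^ γ₂) ∧
        (α₂ = 0 → β₂ ≠ 0 → γ₁ = 0 →
          ((b * a) ^ α₁ * a ^ β₁ * b ^ γ₁) * ((b * a) ^ α₂ * a ^ β₂ * b ^ γ₂) =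
            (b * a) ^ α₁ * a ^ (β₁ + β₂) * b ^ γ₂) ∧
        (α₂ = 0 → β₂ = 0 →
          ((b * a) ^ α₁ * a ^ β₁ * b ^ γ₁) * ((b * a) ^ α₂ * a ^ β₂ * b ^ γ₂) =
            (b * a) ^ α₁ * a ^ β₁ * b ^ (γ₁ + γ₂)) := by
  constructor
  · intro x
    obtain ⟨p, hp⟩ := exists_nf x
    refine ⟨p, hp, fun q hq => ?_⟩
    have h : φ ((b * a) ^ q.1 * a ^ q.2.1 * b ^ q.2.2)
        = φ ((b * a) ^ p.1 * a ^ p.2.1 * b ^ p.2.2) := by rw [← hp, ← hq]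
    rw [φ_nf, φ_nf] at h
    obtain ⟨q1, q2, q3⟩ := q
    obtain ⟨p1, p2, p3⟩ := p
    simpa using h
  · intro α₁ β₁ γ₁ α₂ β₂ γ₂
    refine ⟨fun h => case1 _ _ _ _ _ _ h, fun h1 h2 h3 => ?_, fun h1 h2 h3 => ?_,
      fun h1 h2 => ?_⟩
    · subst h1; exact case2 _ _ _ _ _ h2 h3
    · subst h1; subst h3; exact case3 _ _ _ _
    · subst h1; subst h2; exact case4 _ _ _ _
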